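/- Let K = ⟨y1x1 - x2 - x3, y2x2 - x3 - x1, y3x3 - x1 - x2, y1y2y3 - y1 - y2 - y3 - 2⟩ in Z[x1,x2,x3,y1,y2,y3]. Then the quotient ring Z[x1,x2,x3,y1,y2,y3]/K is isomorphic to the subring of Z[x1^{±1},x2^{±1},x3^{±1}] generated by x1, x2, x3, (x2+x3)/x1, (x3+x1)/x2, (x1+x2)/x3, with the isomorphism sending xi to xi and yi to the corresponding Laurent polynomial. -/

import Mathlib

/-- The Laurent polynomial ring `ℤ[x₁^{±1}, x₂^{±1}, x₃^{±1}]`. -/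
abbrev MvLaurent3 : Type := AddMonoidAlgebra ℤ (Fin 3 →₀ ℤ)

/-- The (invertible) variable `xᵢ`. -/
noncomputable def Xu (i : Fin 3) : MvLaurent3ˣ :=
  Units.map (AddMonoidAlgebra.of ℤ (Fin 3 →₀ ℤ))
    (toUnits (Multiplicative.ofAdd (Finsupp.single i (1 : ℤ))))

/-- The adjacent cluster variables `y₁ = (x₂+x₃)/x₁`, `y₂ = (x₃+x₁)/x₂`,
`y₃ = (x₁+x₂)/x₃`. -/
noncomputable def yv (i : Fin 3) : MvLaurent3 :=
  ((Xu (i + 1) : MvLaurent3) + (Xu (i + 2) : MvLaurent3)) * (((Xu i)⁻¹ : MvLaurent3ˣ) : MvLaurent3)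

/-- The ring homomorphism `π : ℤ[x₁,x₂,x₃,y₁,y₂,y₃] → ℤ[x₁^{±1},x₂^{±1},x₃^{±1}]`,
`π(xᵢ) = xᵢ`, `π(yᵢ) = (x_{i+1}+x_{i+2})/xᵢ`; variables indexed by `Fin 3 ⊕ Fin 3`. -/
noncomputable def piHom : MvPolynomial (Fin 3 ⊕ Fin 3) ℤ →+* MvLaurent3 :=
  (MvPolynomial.aeval (Sum.elim (fun i => ((Xu i : MvLaurent3ˣ) : MvLaurent3)) yv)).toRingHom

open MvPolynomial in
/-- The ideal `K = ⟨y₁x₁-x₂-x₃, y₂x₂-x₃-x₁, y₃x₃-x₁-x₂, y₁y₂y₃-y₁-y₂-y₃-2⟩`. -/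
noncomputable def K : Ideal (MvPolynomial (Fin 3 ⊕ Fin 3) ℤ) :=
  Ideal.span
    { X (Sum.inr 0) * X (Sum.inl 0) - X (Sum.inl 1) - X (Sum.inl 2),
      X (Sum.inr 1) * X (Sum.inl 1) - X (Sum.inl 2) - X (Sum.inl 0),
      X (Sum.inr 2) * X (Sum.inl 2) - X (Sum.inl 0) - X (Sum.inl 1),
      X (Sum.inr 0) * X (Sum.inr 1) * X (Sum.inr 2)
        - X (Sum.inr 0) - X (Sum.inr 1) - X (Sum.inr 2) - 2 }

/-!
The exchange relations give `yᵢ xᵢ ≡ xᵢ₊₁ + xᵢ₊₂` modulo `K`, so for every `f` some `mᴺ f`, with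
`m = x₀x₁x₂`, is congruent to a polynomial in the `xᵢ` alone. If `π f = 0`, that polynomial dies in
`ℤ[x^{±1}]`, hence is `0`, and `mᴺ f ∈ K`. It therefore suffices that every `xᵢ` is a
non-zero-divisor modulo `K`; by the cyclic symmetry only `x₀` needs an argument. Let `x₀ g ∈ K`.
Killing all `xᵢ` shows that the coefficient of the cubic relation lies in `(x₀, x₁, x₂)`. Since
`xᵢ` times the cubic relation is a combination of exchange relations, after subtracting a multiple
of the cubic relation from `g` the product `x₀ g` is such a combination. Setting `x₀ = 0` turns
it into a syzygy of `-x₁-x₂, y₁x₁-x₂, y₂x₂-x₁`. Dividing successively by the primes `x₁+x₂` and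
`y₂+1` shows that these syzygies are generated by the
Koszul ones and `(y₁y₂-1, y₂+1, y₁+1)`, the coefficients of `x₀ · cubic` in terms of the exchange
relations; this description exhibits `g` as an element of `K`.
-/

namespace MvPolynomial

section Substitution

variable {σ R : Type*} [CommRing R]

theorem X_sub_dvd_sub_bind₁_update [DecidableEq σ] (v : σ) (t p : MvPolynomial σ R) :
    X v - t ∣ p - bind₁ (Function.update X v t) p := by
  induction p using MvPolynomial.induction_on with
  | C a => simp
  | add p q hp hq => simpa [add_sub_add_comm] using dvd_add hp hq
  | mul_X p w hp =>
    rw [map_mul, bind₁_X_right]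
    by_cases hw : w = v
    · subst hw
      rw [Function.update_self]
      have : p * X w - bind₁ (Function.update X w t) p * t
          = (p - bind₁ (Function.update X w t) p) * X w
            + bind₁ (Function.update X w t) p * (X w - t) := by ring
      rw [this]
      exact dvd_add (hp.mul_right _) (dvd_mul_left _ _)
    · rw [Function.update_of_ne hw, ← sub_mul]
      exact hp.mul_right _

theorem X_sub_dvd_iff_bind₁_update_eq_zero [DecidableEq σ] {v : σ} {t : MvPolynomial σ R}
    (ht : bind₁ (Function.update X v t) t = t) (p : MvPolynomial σ R) :
    X v - t ∣ p ↔ bind₁ (Function.update X v t) p = 0 := by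
  refine ⟨?_, fun h => by simpa [h] using X_sub_dvd_sub_bind₁_update v t p⟩
  rintro ⟨q, rfl⟩
  simp [ht]

theorem X_sub_dvd_of_dvd_mul_left [DecidableEq σ] [IsDomain R] {v : σ}
    {t a p : MvPolynomial σ R} (ht : bind₁ (Function.update X v t) t = t)
    (ha : bind₁ (Function.update X v t) a ≠ 0) (h : X v - t ∣ a * p) : X v - t ∣ p := by
  rw [X_sub_dvd_iff_bind₁_update_eq_zero ht, map_mul] at h
  rw [X_sub_dvd_iff_bind₁_update_eq_zero ht]
  exact (mul_eq_zero.mp h).resolve_left ha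

theorem sub_bind₁_elim_zero_mem_span {τ : Type*} (p : MvPolynomial (σ ⊕ τ) R) :
    p - bind₁ (Sum.elim 0 (X ∘ Sum.inr)) p ∈
      Ideal.span (Set.range (X ∘ Sum.inl : σ → MvPolynomial (σ ⊕ τ) R)) := by
  induction p using MvPolynomial.induction_on with
  | C a => simp
  | add p q hp hq => simpa [add_sub_add_comm] using Ideal.add_mem _ hp hq
  | mul_X p w hp =>
    rcases w with i | j
    · have hX : X (Sum.inl i) ∈
          Ideal.span (Set.range (X ∘ Sum.inl : σ → MvPolynomial (σ ⊕ τ) R)) :=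
        Ideal.subset_span ⟨i, rfl⟩
      simpa using Ideal.mul_mem_left _ p hX
    · simpa [← sub_mul] using Ideal.mul_mem_right _ _ hp

end Substitution

theorem aeval_single_single_injective {σ R : Type*} [CommSemiring R] :
    Function.Injective (aeval (R := R) fun i : σ ↦
      (AddMonoidAlgebra.single (Finsupp.single i 1) 1 : AddMonoidAlgebra R (σ →₀ ℤ))) := by
  set ι : (σ →₀ ℕ) →+ (σ →₀ ℤ) := Finsupp.mapRange.addMonoidHom (Nat.castAddMonoidHom ℤ)
  have hι : Function.Injective ι := Finsupp.mapRange_injective _ (by simp) Nat.cast_injective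
  have : aeval (R := R) (fun i : σ ↦
      (AddMonoidAlgebra.single (Finsupp.single i 1) 1 : AddMonoidAlgebra R (σ →₀ ℤ))) =
      AddMonoidAlgebra.mapDomainAlgHom R R ι := by
    refine algHom_ext fun i => ?_
    rw [aeval_X, X, monomial, AddMonoidAlgebra.mapDomainAlgHom_apply]
    simp [ι]
  rw [this]
  exact AddMonoidAlgebra.mapDomain_injective hι

end MvPolynomial

open MvPolynomial

namespace LowerBoundThreeCycle

local notation "ℤ[x,y]" => MvPolynomial (Fin 3 ⊕ Fin 3) ℤ
local notation:max "𝐱" i:max => (X (Sum.inl i) : ℤ[x,y])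
local notation:max "𝐲" i:max => (X (Sum.inr i) : ℤ[x,y])

noncomputable def exchangeRel (i : Fin 3) : ℤ[x,y] :=
  𝐲 i * 𝐱 i - 𝐱 (i + 1) - 𝐱 (i + 2)

noncomputable def cubicRel : ℤ[x,y] :=
  𝐲 0 * 𝐲 1 * 𝐲 2 - 𝐲 0 - 𝐲 1 - 𝐲 2 - 2

theorem K_eq_sup : K = Ideal.span (Set.range exchangeRel) ⊔ Ideal.span {cubicRel} := by
  change Ideal.span {exchangeRel 0, exchangeRel 1, exchangeRel 2, cubicRel} = _
  rw [← Ideal.span_union]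
  congr 1
  ext p
  simp [Fin.exists_fin_succ, eq_comm]
  tauto

theorem exchangeRel_mem_K (i : Fin 3) : exchangeRel i ∈ K := by
  rw [K_eq_sup]
  exact Ideal.mem_sup_left (Ideal.subset_span ⟨i, rfl⟩)

theorem cubicRel_mem_K : cubicRel ∈ K := by
  rw [K_eq_sup]
  exact Ideal.mem_sup_right (Ideal.mem_span_singleton_self _)

theorem mk_exchangeRel (i : Fin 3) : Ideal.Quotient.mk K (exchangeRel i) = 0 :=
  Ideal.Quotient.eq_zero_iff_mem.mpr (exchangeRel_mem_K i)

theorem mk_cubicRel : Ideal.Quotient.mk K cubicRel = 0 :=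
  Ideal.Quotient.eq_zero_iff_mem.mpr cubicRel_mem_K

theorem X_mul_cubicRel (i : Fin 3) :
    𝐱 i * cubicRel = (𝐲 (i + 1) * 𝐲 (i + 2) - 1) * exchangeRel i
      + (𝐲 (i + 2) + 1) * exchangeRel (i + 1) + (𝐲 (i + 1) + 1) * exchangeRel (i + 2) := by
  fin_cases i <;> simp [exchangeRel, cubicRel] <;> ring

theorem X_mul_cubicRel_mem_span (i : Fin 3) :
    𝐱 i * cubicRel ∈ Ideal.span (Set.range exchangeRel) := by
  have (j : Fin 3) : exchangeRel j ∈ Ideal.span (Set.range exchangeRel) :=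
    Ideal.subset_span ⟨j, rfl⟩
  rw [X_mul_cubicRel]
  exact add_mem (add_mem (Ideal.mul_mem_left _ _ (this _)) (Ideal.mul_mem_left _ _ (this _)))
    (Ideal.mul_mem_left _ _ (this _))

theorem piHom_exchangeRel (i : Fin 3) : piHom (exchangeRel i) = 0 := by
  simp [piHom, exchangeRel, yv, mul_assoc]

theorem piHom_cubicRel : piHom cubicRel = 0 := by
  have h := congrArg piHom (X_mul_cubicRel 0)
  simp only [map_mul, map_add, piHom_exchangeRel, mul_zero, add_zero] at h
  simpa [piHom] using h

theorem K_le_ker_piHom : K ≤ RingHom.ker piHom := by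
  rw [K_eq_sup, sup_le_iff, Ideal.span_le, Ideal.span_le]
  constructor
  · rintro _ ⟨i, rfl⟩
    exact piHom_exchangeRel i
  · rintro _ rfl
    exact piHom_cubicRel

theorem range_piHom : piHom.range = Subring.closure
      { ((Xu 0 : MvLaurent3ˣ) : MvLaurent3), ((Xu 1 : MvLaurent3ˣ) : MvLaurent3),
        ((Xu 2 : MvLaurent3ˣ) : MvLaurent3), yv 0, yv 1, yv 2 } := by
  have hs : Set.range (Sum.elim (fun i => (Xu i : MvLaurent3)) yv) =
      {(Xu 0 : MvLaurent3), (Xu 1 : MvLaurent3), (Xu 2 : MvLaurent3), yv 0, yv 1, yv 2} := by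
    ext
    simp [Fin.exists_fin_succ, eq_comm, or_assoc]
  have h := Algebra.adjoin_range_eq_range_aeval ℤ (Sum.elim (fun i => (Xu i : MvLaurent3)) yv)
  rw [hs] at h
  ext z
  exact (SetLike.ext_iff.mp h z).symm.trans (SetLike.ext_iff.mp (Algebra.adjoin_int _) z)

theorem piHom_rename (h : MvPolynomial (Fin 3) ℤ) :
    piHom (rename Sum.inl h) =
      aeval (fun i => (AddMonoidAlgebra.single (Finsupp.single i 1) 1 : MvLaurent3)) h := by
  simp [piHom, aeval_rename, Function.comp_def, Xu, AddMonoidAlgebra.of_apply]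

theorem exists_pow_mul_X_sub_rename_mem_K (v : Fin 3 ⊕ Fin 3) :
    ∃ (N : ℕ) (h : MvPolynomial (Fin 3) ℤ),
      (𝐱 0 * 𝐱 1 * 𝐱 2) ^ N * X v - rename Sum.inl h ∈ K := by
  rcases v with i | j
  · exact ⟨0, X i, by simp⟩
  · refine ⟨1, X (j + 1) * X (j + 2) * (X (j + 1) + X (j + 2)), ?_⟩
    convert K.mul_mem_left (𝐱 (j + 1) * 𝐱 (j + 2)) (exchangeRel_mem_K j) using 1
    fin_cases j <;> simp [exchangeRel] <;> ring

theorem exists_pow_mul_sub_rename_mem_K (g : ℤ[x,y]) :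
    ∃ (N : ℕ) (h : MvPolynomial (Fin 3) ℤ),
      (𝐱 0 * 𝐱 1 * 𝐱 2) ^ N * g - rename Sum.inl h ∈ K := by
  induction g using MvPolynomial.induction_on with
  | C a => exact ⟨0, C a, by simp⟩
  | add p q hp hq =>
    obtain ⟨N₁, h₁, hN₁⟩ := hp
    obtain ⟨N₂, h₂, hN₂⟩ := hq
    refine ⟨N₁ + N₂, (X 0 * X 1 * X 2) ^ N₂ * h₁ + (X 0 * X 1 * X 2) ^ N₁ * h₂, ?_⟩
    convert add_mem (K.mul_mem_left ((𝐱 0 * 𝐱 1 * 𝐱 2) ^ N₂) hN₁)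
      (K.mul_mem_left ((𝐱 0 * 𝐱 1 * 𝐱 2) ^ N₁) hN₂) using 1
    simp only [map_add, map_mul, map_pow, rename_X]
    ring
  | mul_X p v hp =>
    obtain ⟨N₁, h₁, hN₁⟩ := hp
    obtain ⟨N₂, h₂, hN₂⟩ := exists_pow_mul_X_sub_rename_mem_K v
    refine ⟨N₁ + N₂, h₁ * h₂, ?_⟩
    convert add_mem (K.mul_mem_left ((𝐱 0 * 𝐱 1 * 𝐱 2) ^ N₂ * X v) hN₁)
      (K.mul_mem_left (rename Sum.inl h₁) hN₂) using 1
    simp only [map_mul]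
    ring

theorem exists_koszul_of_syzygy {a b q : ℤ[x,y]}
    (h : a * (𝐲 1 + 1) - b * (𝐲 2 + 1) = (𝐱 1 + 𝐱 2) * q) :
    ∃ d e f, b = (𝐲 1 + 1) * d - (𝐱 1 + 𝐱 2) * e ∧ a = (𝐲 2 + 1) * d + (𝐱 1 + 𝐱 2) * f ∧
      q = (𝐲 2 + 1) * e + (𝐲 1 + 1) * f := by
  have hy (j : Fin 3) : 𝐲 j + 1 ≠ 0 := fun h0 => by simpa using congrArg (eval 0) h0
  have hu : 𝐱 1 + 𝐱 2 ≠ 0 := fun h0 => by simpa using congrArg (eval 1) h0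
  set F := bind₁ (Function.update X (Sum.inr 1) (-1 : ℤ[x,y]))
  have hF : -(F b * (𝐲 2 + 1)) = (𝐱 1 + 𝐱 2) * F q := by
    simpa [F] using congrArg F h
  obtain ⟨e, he⟩ : 𝐲 2 + 1 ∣ F q := by
    rw [← sub_neg_eq_add]
    exact X_sub_dvd_of_dvd_mul_left (a := 𝐱 1 + 𝐱 2) (by simp) (by simpa using hu)
      ⟨-F b, by linear_combination -hF⟩
  have hFb : F b = -((𝐱 1 + 𝐱 2) * e) :=
    mul_left_cancel₀ (hy 2) (by linear_combination -hF - (𝐱 1 + 𝐱 2) * he)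
  obtain ⟨d, hd⟩ := X_sub_dvd_sub_bind₁_update (Sum.inr 1) (-1) b
  obtain ⟨f, hf⟩ := X_sub_dvd_sub_bind₁_update (Sum.inr 1) (-1) q
  refine ⟨d, e, f, by linear_combination hd + hFb, ?_, by linear_combination hf + he⟩
  exact mul_left_cancel₀ (hy 1)
    (by linear_combination h + (𝐲 2 + 1) * (hd + hFb) + (𝐱 1 + 𝐱 2) * (hf + he))

theorem exists_of_syzygy_at_x₀_eq_zero {b₀ b₁ b₂ : ℤ[x,y]}
    (h : b₀ * (-𝐱 1 - 𝐱 2) + b₁ * (𝐲 1 * 𝐱 1 - 𝐱 2) + b₂ * (𝐲 2 * 𝐱 2 - 𝐱 1) = 0) :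
    ∃ d e f, b₀ = d * (𝐲 1 * 𝐲 2 - 1) + e * (𝐲 1 * 𝐱 1 - 𝐱 2) + f * (𝐲 2 * 𝐱 2 - 𝐱 1) ∧
      b₁ = d * (𝐲 2 + 1) + e * (𝐱 1 + 𝐱 2) ∧ b₂ = d * (𝐲 1 + 1) + f * (𝐱 1 + 𝐱 2) := by
  have hu : 𝐱 1 + 𝐱 2 ≠ 0 := fun h0 => by simpa using congrArg (eval 1) h0
  obtain ⟨q, hq⟩ : 𝐱 1 + 𝐱 2 ∣ b₁ * (𝐲 1 + 1) - b₂ * (𝐲 2 + 1) := by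
    rw [← sub_neg_eq_add]
    exact X_sub_dvd_of_dvd_mul_left (a := 𝐱 1) (by simp) (by simp)
      ⟨b₀ + b₁ - 𝐲 2 * b₂, by linear_combination h⟩
  have hb₀ : b₀ = 𝐱 1 * q - b₁ + 𝐲 2 * b₂ :=
    mul_left_cancel₀ hu (by linear_combination 𝐱 1 * hq - h)
  obtain ⟨d, e, f, hb₂, hb₁, hq'⟩ := exists_koszul_of_syzygy hq
  refine ⟨d, f, -e, ?_, by linear_combination hb₁, by linear_combination hb₂⟩
  linear_combination hb₀ - hb₁ + 𝐲 2 * hb₂ + 𝐱 1 * hq'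

theorem mem_K_of_X_zero_mul_mem_span_exchangeRel {g : ℤ[x,y]}
    (hg : 𝐱 0 * g ∈ Ideal.span (Set.range exchangeRel)) : g ∈ K := by
  rw [Ideal.span, Submodule.mem_span_range_iff_exists_fun] at hg
  obtain ⟨c, hc⟩ := hg
  simp only [Fin.sum_univ_three, smul_eq_mul] at hc
  set B := bind₁ (Function.update X (Sum.inl 0) (0 : ℤ[x,y]))
  have hsyz : B (c 0) * (-𝐱 1 - 𝐱 2) + B (c 1) * (𝐲 1 * 𝐱 1 - 𝐱 2)
      + B (c 2) * (𝐲 2 * 𝐱 2 - 𝐱 1) = 0 := by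
    simpa [B, exchangeRel] using congrArg B hc
  obtain ⟨d, e, f, h₀, h₁, h₂⟩ := exists_of_syzygy_at_x₀_eq_zero hsyz
  have ht (i : Fin 3) : 𝐱 0 ∣ c i - B (c i) := by
    simpa using X_sub_dvd_sub_bind₁_update (Sum.inl 0) 0 (c i)
  choose t ht using ht
  -- `c i = B (c i) + x₀ tᵢ` and `exchangeRel i` is its value at `x₀ = 0` plus `x₀ (y₀, -1, -1)ᵢ`
  have hg' : g = t 0 * exchangeRel 0 + t 1 * exchangeRel 1 + t 2 * exchangeRel 2
      + d * cubicRel + e * (exchangeRel 0 + 𝐲 0 * exchangeRel 1)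
      + f * (exchangeRel 0 + 𝐲 0 * exchangeRel 2) := by
    refine mul_left_cancel₀ (X_ne_zero (Sum.inl 0)) ?_
    simp only [exchangeRel, cubicRel, Fin.reduceAdd] at hc ⊢
    linear_combination -hc + (𝐲 0 * 𝐱 0 - 𝐱 1 - 𝐱 2) * (ht 0 + h₀)
      + (𝐲 1 * 𝐱 1 - 𝐱 2 - 𝐱 0) * (ht 1 + h₁) + (𝐲 2 * 𝐱 2 - 𝐱 0 - 𝐱 1) * (ht 2 + h₂)
  rw [← Ideal.Quotient.eq_zero_iff_mem, hg']
  simp [mk_exchangeRel, mk_cubicRel]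

theorem exists_sub_mul_X_zero_mul_cubicRel_mem_span {p : ℤ[x,y]} (hp : p ∈ K)
    (hp₀ : bind₁ (Sum.elim 0 (X ∘ Sum.inr)) p = (0 : ℤ[x,y])) :
    ∃ a, p - a * (𝐱 0 * cubicRel) ∈ Ideal.span (Set.range exchangeRel) := by
  set γ := bind₁ (Sum.elim 0 (X ∘ Sum.inr) : Fin 3 ⊕ Fin 3 → ℤ[x,y])
  rw [K_eq_sup, Submodule.mem_sup] at hp
  obtain ⟨e, he, _, hr, rfl⟩ := hp
  obtain ⟨c, rfl⟩ := Ideal.mem_span_singleton'.mp hr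
  have hγe : γ e = 0 := by
    suffices Ideal.span (Set.range exchangeRel) ≤ RingHom.ker γ from this he
    rw [Ideal.span_le]
    rintro _ ⟨i, rfl⟩
    simp [γ, exchangeRel]
  have hγc : γ c = 0 := by
    have hr₃ : cubicRel ≠ 0 := fun h0 => by
      simpa [cubicRel, map_ofNat] using congrArg (eval 0) h0
    have hγr₃ : γ cubicRel = cubicRel := by simp [γ, cubicRel, map_ofNat]
    simpa [hγe, hγr₃, hr₃] using hp₀
  have hc := sub_bind₁_elim_zero_mem_span c
  rw [hγc, sub_zero, Ideal.span, Submodule.mem_span_range_iff_exists_fun] at hc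
  obtain ⟨α, rfl⟩ := hc
  refine ⟨α 0, ?_⟩
  have hX := X_mul_cubicRel_mem_span
  simp only [Fin.sum_univ_three, smul_eq_mul, Function.comp_apply]
  convert add_mem (add_mem he (Ideal.mul_mem_left _ (α 1) (hX 1)))
    (Ideal.mul_mem_left _ (α 2) (hX 2)) using 1
  ring

theorem mem_K_of_X_zero_mul_mem {g : ℤ[x,y]} (hg : 𝐱 0 * g ∈ K) : g ∈ K := by
  obtain ⟨a, ha⟩ := exists_sub_mul_X_zero_mul_cubicRel_mem_span hg (by simp)
  have : g - a * cubicRel ∈ K :=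
    mem_K_of_X_zero_mul_mem_span_exchangeRel (by convert ha using 1; ring)
  simpa using add_mem this (K.mul_mem_left a cubicRel_mem_K)

noncomputable def rotate : ℤ[x,y] →ₐ[ℤ] ℤ[x,y] :=
  rename (Sum.map (· + 1) (· + 1))

theorem rotate_rotate_rotate (p : ℤ[x,y]) : rotate (rotate (rotate p)) = p := by
  have h3 : ∀ i : Fin 3, i + 1 + 1 + 1 = i := by decide
  suffices (rotate.comp rotate).comp rotate = AlgHom.id ℤ _ from congr($this p)
  refine algHom_ext fun v => ?_
  rcases v with i | i <;> simp [rotate, h3]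

theorem rotate_mem_K {p : ℤ[x,y]} (hp : p ∈ K) : rotate p ∈ K := by
  suffices K ≤ K.comap rotate from this hp
  nth_rw 1 [K_eq_sup]
  rw [sup_le_iff, Ideal.span_le, Ideal.span_le]
  constructor
  · rintro _ ⟨i, rfl⟩
    have : rotate (exchangeRel i) = exchangeRel (i + 1) := by
      simp [exchangeRel, rotate, add_right_comm]
    simpa [this] using exchangeRel_mem_K (i + 1)
  · rintro _ rfl
    have : rotate cubicRel = cubicRel := by
      simp [cubicRel, rotate, map_ofNat]
      ring
    simpa [this] using cubicRel_mem_K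

theorem mem_K_of_X_succ_mul_mem {i : Fin 3} (hi : ∀ g, 𝐱 i * g ∈ K → g ∈ K) {g : ℤ[x,y]}
    (hg : 𝐱 (i + 1) * g ∈ K) : g ∈ K := by
  have hx : rotate (rotate (𝐱 (i + 1))) = 𝐱 i := by
    simpa [rotate] using rotate_rotate_rotate (𝐱 i)
  have := hi _ (by simpa [hx] using rotate_mem_K (rotate_mem_K hg))
  simpa [rotate_rotate_rotate] using rotate_mem_K this

theorem mem_K_of_X_mul_mem (i : Fin 3) {g : ℤ[x,y]} (hg : 𝐱 i * g ∈ K) : g ∈ K := by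
  have h₀ (g) := @mem_K_of_X_zero_mul_mem g
  have h₁ (g) := @mem_K_of_X_succ_mul_mem 0 h₀ g
  fin_cases i
  exacts [h₀ g hg, h₁ g hg, mem_K_of_X_succ_mul_mem (i := 1) h₁ hg]

theorem mk_X_mem_nonZeroDivisors (i : Fin 3) :
    Ideal.Quotient.mk K (𝐱 i) ∈ nonZeroDivisors (ℤ[x,y] ⧸ K) := by
  refine mem_nonZeroDivisors_iff_left.mpr fun z hz => ?_
  obtain ⟨g, rfl⟩ := Ideal.Quotient.mk_surjective z
  rw [← map_mul, Ideal.Quotient.eq_zero_iff_mem] at hz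
  exact Ideal.Quotient.eq_zero_iff_mem.mpr (mem_K_of_X_mul_mem i hz)

end LowerBoundThreeCycle

open LowerBoundThreeCycle

/-- `ℤ[x₁,x₂,x₃,y₁,y₂,y₃]/K` is isomorphic to the subring of
`ℤ[x₁^{±1},x₂^{±1},x₃^{±1}]` generated by `x₁,x₂,x₃,(x₂+x₃)/x₁,(x₃+x₁)/x₂,(x₁+x₂)/x₃`,
via the map sending `xᵢ ↦ xᵢ` and `yᵢ ↦` the corresponding Laurent polynomial:
equivalently, `K` is exactly the kernel of `π` and the image of `π` is exactly
that subring (so `π` descends to the desired isomorphism). -/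
theorem lower_bound_presentation_three_cycle :
    RingHom.ker piHom = K ∧
    piHom.range = Subring.closure
      { ((Xu 0 : MvLaurent3ˣ) : MvLaurent3), ((Xu 1 : MvLaurent3ˣ) : MvLaurent3),
        ((Xu 2 : MvLaurent3ˣ) : MvLaurent3), yv 0, yv 1, yv 2 } := by
  refine ⟨le_antisymm (fun f hf => ?_) K_le_ker_piHom, range_piHom⟩
  obtain ⟨N, h, hN⟩ := exists_pow_mul_sub_rename_mem_K f
  have h0 : h = 0 := aeval_single_single_injective <| by
    simpa [piHom_rename, RingHom.mem_ker.mp hf] using K_le_ker_piHom hN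
  have hm := pow_mem (mul_mem (mul_mem (mk_X_mem_nonZeroDivisors 0)
    (mk_X_mem_nonZeroDivisors 1)) (mk_X_mem_nonZeroDivisors 2)) N
  rw [h0, map_zero, sub_zero, ← Ideal.Quotient.eq_zero_iff_mem, map_mul] at hN
  rw [← Ideal.Quotient.eq_zero_iff_mem]
  simpa [mul_left_mem_nonZeroDivisors_eq_zero_iff hm] using hN
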